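/- If λ = τ² with τ > 0 is an eigenvalue of the problem −U'' = λU on (0,1/3)∪(1/3,2/3)∪(2/3,1) with U(0)=U(1)=0, continuity at 1/3 and 2/3, and jump conditions U'_−(j/3) − U'_+(j/3) = 12·U(j/3) for j=1,2, admitting a nonzero solution U, then τ satisfies 108·sin(τ/3) − 36·sin τ + 12τ·cos τ − 12τ·cos(τ/3) + τ²·sin τ = 0. -/

import Mathlib

open Set Filter

lemma limeq (g : ℝ → ℝ) {f : ℝ → ℝ} {a b x0 L : ℝ} (hab : a < b) (hx0 : x0 ∈ Set.Icc a b)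
    (hg : Continuous g) (hfg : ∀ x ∈ Set.Ioo a b, f x = g x)
    (hL : Filter.Tendsto f (nhdsWithin x0 (Set.Ioo a b)) (nhds L)) :
    L = g x0 := by
  have hne : (nhdsWithin x0 (Set.Ioo a b)).NeBot := by
    rw [← mem_closure_iff_nhdsWithin_neBot, closure_Ioo hab.ne]
    exact hx0
  have h2 : Filter.Tendsto f (nhdsWithin x0 (Set.Ioo a b)) (nhds (g x0)) := by
    refine (hg.continuousWithinAt.tendsto).congr' ?_
    filter_upwards [self_mem_nhdsWithin] with x hx using (hfg x hx).symm
  exact tendsto_nhds_unique hL h2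

lemma solu (τ : ℝ) (hτ : 0 < τ) (U U' : ℝ → ℝ) (a b : ℝ) (hab : a < b)
    (h : ∀ x ∈ Set.Ioo a b, HasDerivAt U (U' x) x ∧ HasDerivAt U' (-(τ ^ 2) * U x) x) :
    ∃ p q : ℝ, ∀ x ∈ Set.Ioo a b,
      U x = p * Real.cos (τ * x) + q * Real.sin (τ * x) ∧
      U' x = τ * (q * Real.cos (τ * x) - p * Real.sin (τ * x)) := by
  have hτ' : τ ≠ 0 := ne_of_gt hτ
  set P : ℝ → ℝ := fun x => U x * Real.cos (τ * x) - U' x * (Real.sin (τ * x) / τ) with hP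
  set Q : ℝ → ℝ := fun x => U x * Real.sin (τ * x) + U' x * (Real.cos (τ * x) / τ) with hQ
  have hder : ∀ x ∈ Set.Ioo a b, HasDerivAt P 0 x ∧ HasDerivAt Q 0 x := by
    intro x hx
    obtain ⟨h1, h2⟩ := h x hx
    have hf : HasDerivAt (fun y : ℝ => τ * y) τ x := by
      simpa using (hasDerivAt_id x).const_mul τ
    have hcos := hf.cos
    have hsin := hf.sin
    constructor
    · have := (h1.mul hcos).sub (h2.mul (hsin.div_const τ))
      refine this.congr_deriv ?_
      field_simp
      ring
    · have := (h1.mul hsin).add (h2.mul (hcos.div_const τ))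
      refine this.congr_deriv ?_
      field_simp
      ring
  have hconst : ∀ f : ℝ → ℝ, (∀ x ∈ Set.Ioo a b, HasDerivAt f 0 x) →
      ∀ x ∈ Set.Ioo a b, ∀ y ∈ Set.Ioo a b, f x = f y := by
    intro f hf x hx y hy
    refine (convex_Ioo a b).is_const_of_fderivWithin_eq_zero
      (fun z hz => (hf z hz).differentiableAt.differentiableWithinAt) ?_ hx hy
    intro z hz
    rw [fderivWithin_of_isOpen isOpen_Ioo hz]
    have h0 : HasFDerivAt f (ContinuousLinearMap.smulRight (1 : ℝ →L[ℝ] ℝ) (0:ℝ)) z :=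
      hf z hz
    rw [h0.fderiv]
    ext
    simp
  have hx0 : (a + b) / 2 ∈ Set.Ioo a b := by constructor <;> nlinarith
  refine ⟨P ((a+b)/2), Q ((a+b)/2), fun x hx => ?_⟩
  have hPx : P x = P ((a+b)/2) := hconst P (fun z hz => (hder z hz).1) x hx _ hx0
  have hQx : Q x = Q ((a+b)/2) := hconst Q (fun z hz => (hder z hz).2) x hx _ hx0
  rw [← hPx, ← hQx]
  have hpy := Real.sin_sq_add_cos_sq (τ * x)
  constructor
  · simp only [hP, hQ]
    field_simp
    linear_combination (-τ * U x) * hpy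
  · simp only [hP, hQ]
    field_simp
    linear_combination (-U' x) * hpy



/-- If `λ = τ²` with `τ > 0` is an eigenvalue of `−U'' = λU` on
`(0,1/3) ∪ (1/3,2/3) ∪ (2/3,1)` with Dirichlet conditions, continuity at `1/3, 2/3` and
jump conditions `U'₋(j/3) − U'₊(j/3) = 12U(j/3)`, admitting a nonzero solution, then
`108 sin(τ/3) − 36 sin τ + 12τ cos τ − 12τ cos(τ/3) + τ² sin τ = 0`. -/
theorem stmt12 (τ : ℝ) (hτ : 0 < τ) (U U' : ℝ → ℝ)
    (hcont : ContinuousOn U (Set.Icc 0 1))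
    (hU0 : U 0 = 0) (hU1 : U 1 = 0)
    (hode : ∀ x ∈ Set.Ioo (0 : ℝ) (1 / 3) ∪ Set.Ioo (1 / 3 : ℝ) (2 / 3) ∪
        Set.Ioo (2 / 3 : ℝ) 1,
      HasDerivAt U (U' x) x ∧ HasDerivAt U' (-(τ ^ 2) * U x) x)
    (Ul₁ Ur₁ Ul₂ Ur₂ : ℝ)
    (hUl₁ : Filter.Tendsto U' (nhdsWithin (1 / 3) (Set.Iio (1 / 3))) (nhds Ul₁))
    (hUr₁ : Filter.Tendsto U' (nhdsWithin (1 / 3) (Set.Ioi (1 / 3))) (nhds Ur₁))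
    (hUl₂ : Filter.Tendsto U' (nhdsWithin (2 / 3) (Set.Iio (2 / 3))) (nhds Ul₂))
    (hUr₂ : Filter.Tendsto U' (nhdsWithin (2 / 3) (Set.Ioi (2 / 3))) (nhds Ur₂))
    (hjump1 : Ul₁ - Ur₁ = 12 * U (1 / 3))
    (hjump2 : Ul₂ - Ur₂ = 12 * U (2 / 3))
    (hne : ∃ x ∈ Set.Icc (0 : ℝ) 1, U x ≠ 0) :
    108 * Real.sin (τ / 3) - 36 * Real.sin τ + 12 * τ * Real.cos τ -
      12 * τ * Real.cos (τ / 3) + τ ^ 2 * Real.sin τ = 0 := by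
  have hτ' : τ ≠ 0 := ne_of_gt hτ
  have hab1 : (0:ℝ) < 1/3 := by norm_num
  have hab2 : (1/3:ℝ) < 2/3 := by norm_num
  have hab3 : (2/3:ℝ) < 1 := by norm_num
  obtain ⟨p1, q1, hsol1⟩ := solu τ hτ U U' 0 (1/3) hab1
    (fun x hx => hode x (Or.inl (Or.inl hx)))
  obtain ⟨p2, q2, hsol2⟩ := solu τ hτ U U' (1/3) (2/3) hab2
    (fun x hx => hode x (Or.inl (Or.inr hx)))
  obtain ⟨p3, q3, hsol3⟩ := solu τ hτ U U' (2/3) 1 hab3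
    (fun x hx => hode x (Or.inr hx))
  -- continuity subsets
  have hsub1 : Set.Ioo (0:ℝ) (1/3) ⊆ Set.Icc 0 1 := fun x hx => ⟨le_of_lt hx.1, by linarith [hx.2]⟩
  have hsub2 : Set.Ioo (1/3:ℝ) (2/3) ⊆ Set.Icc 0 1 := fun x hx => ⟨by linarith [hx.1], by linarith [hx.2]⟩
  have hsub3 : Set.Ioo (2/3:ℝ) 1 ⊆ Set.Icc 0 1 := fun x hx => ⟨by linarith [hx.1], le_of_lt hx.2⟩
  -- continuous model functions
  have hg1 : Continuous (fun x => p1 * Real.cos (τ * x) + q1 * Real.sin (τ * x)) := by fun_prop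
  have hg2 : Continuous (fun x => p2 * Real.cos (τ * x) + q2 * Real.sin (τ * x)) := by fun_prop
  have hg3 : Continuous (fun x => p3 * Real.cos (τ * x) + q3 * Real.sin (τ * x)) := by fun_prop
  have hd1 : Continuous (fun x => τ * (q1 * Real.cos (τ * x) - p1 * Real.sin (τ * x))) := by fun_prop
  have hd2 : Continuous (fun x => τ * (q2 * Real.cos (τ * x) - p2 * Real.sin (τ * x))) := by fun_prop
  have hd3 : Continuous (fun x => τ * (q3 * Real.cos (τ * x) - p3 * Real.sin (τ * x))) := by fun_prop
  -- value limits for U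
  have hu0 : U 0 = p1 * Real.cos (τ * 0) + q1 * Real.sin (τ * 0) :=
    limeq (fun x => p1 * Real.cos (τ * x) + q1 * Real.sin (τ * x)) hab1 (by norm_num) hg1 (fun x hx => (hsol1 x hx).1)
      (((hcont 0 (by norm_num)).mono hsub1))
  have hu13l : U (1/3) = p1 * Real.cos (τ * (1/3)) + q1 * Real.sin (τ * (1/3)) :=
    limeq (fun x => p1 * Real.cos (τ * x) + q1 * Real.sin (τ * x)) hab1 (by norm_num) hg1 (fun x hx => (hsol1 x hx).1)
      (((hcont (1/3) (by norm_num)).mono hsub1))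
  have hu13r : U (1/3) = p2 * Real.cos (τ * (1/3)) + q2 * Real.sin (τ * (1/3)) :=
    limeq (fun x => p2 * Real.cos (τ * x) + q2 * Real.sin (τ * x)) hab2 (by norm_num) hg2 (fun x hx => (hsol2 x hx).1)
      (((hcont (1/3) (by norm_num)).mono hsub2))
  have hu23l : U (2/3) = p2 * Real.cos (τ * (2/3)) + q2 * Real.sin (τ * (2/3)) :=
    limeq (fun x => p2 * Real.cos (τ * x) + q2 * Real.sin (τ * x)) hab2 (by norm_num) hg2 (fun x hx => (hsol2 x hx).1)
      (((hcont (2/3) (by norm_num)).mono hsub2))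
  have hu23r : U (2/3) = p3 * Real.cos (τ * (2/3)) + q3 * Real.sin (τ * (2/3)) :=
    limeq (fun x => p3 * Real.cos (τ * x) + q3 * Real.sin (τ * x)) hab3 (by norm_num) hg3 (fun x hx => (hsol3 x hx).1)
      (((hcont (2/3) (by norm_num)).mono hsub3))
  have hu1 : U 1 = p3 * Real.cos (τ * 1) + q3 * Real.sin (τ * 1) :=
    limeq (fun x => p3 * Real.cos (τ * x) + q3 * Real.sin (τ * x)) hab3 (by norm_num) hg3 (fun x hx => (hsol3 x hx).1)
      (((hcont 1 (by norm_num)).mono hsub3))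
  -- derivative limits
  have hD1 : Ul₁ = τ * (q1 * Real.cos (τ * (1/3)) - p1 * Real.sin (τ * (1/3))) :=
    limeq (fun x => τ * (q1 * Real.cos (τ * x) - p1 * Real.sin (τ * x))) hab1 (by norm_num) hd1 (fun x hx => (hsol1 x hx).2)
      (hUl₁.mono_left (nhdsWithin_mono _ (fun x hx => hx.2)))
  have hD2 : Ur₁ = τ * (q2 * Real.cos (τ * (1/3)) - p2 * Real.sin (τ * (1/3))) :=
    limeq (fun x => τ * (q2 * Real.cos (τ * x) - p2 * Real.sin (τ * x))) hab2 (by norm_num) hd2 (fun x hx => (hsol2 x hx).2)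
      (hUr₁.mono_left (nhdsWithin_mono _ (fun x hx => hx.1)))
  have hD3 : Ul₂ = τ * (q2 * Real.cos (τ * (2/3)) - p2 * Real.sin (τ * (2/3))) :=
    limeq (fun x => τ * (q2 * Real.cos (τ * x) - p2 * Real.sin (τ * x))) hab2 (by norm_num) hd2 (fun x hx => (hsol2 x hx).2)
      (hUl₂.mono_left (nhdsWithin_mono _ (fun x hx => hx.2)))
  have hD4 : Ur₂ = τ * (q3 * Real.cos (τ * (2/3)) - p3 * Real.sin (τ * (2/3))) :=
    limeq (fun x => τ * (q3 * Real.cos (τ * x) - p3 * Real.sin (τ * x))) hab3 (by norm_num) hd3 (fun x hx => (hsol3 x hx).2)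
      (hUr₂.mono_left (nhdsWithin_mono _ (fun x hx => hx.1)))
  -- normalize arguments
  have harg1 : τ * (1/3 : ℝ) = τ/3 := by ring
  have harg2 : τ * (2/3 : ℝ) = 2*(τ/3) := by ring
  rw [harg1] at hu13l hu13r hD1 hD2
  rw [harg2] at hu23l hu23r hD3 hD4
  rw [mul_one] at hu1
  rw [mul_zero, Real.cos_zero, Real.sin_zero, hU0] at hu0
  have hp1 : p1 = 0 := by linarith [hu0]
  -- trig identities
  have hs2 : Real.sin (2*(τ/3)) = 2 * Real.sin (τ/3) * Real.cos (τ/3) := Real.sin_two_mul _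
  have hc2 : Real.cos (2*(τ/3)) = 2 * Real.cos (τ/3)^2 - 1 := Real.cos_two_mul _
  have hS : Real.sin τ = Real.sin (τ/3) * Real.cos (2*(τ/3)) + Real.cos (τ/3) * Real.sin (2*(τ/3)) := by
    conv_lhs => rw [show τ = τ/3 + 2*(τ/3) by ring]
    exact Real.sin_add _ _
  have hCo : Real.cos τ = Real.cos (τ/3) * Real.cos (2*(τ/3)) - Real.sin (τ/3) * Real.sin (2*(τ/3)) := by
    conv_lhs => rw [show τ = τ/3 + 2*(τ/3) by ring]
    exact Real.cos_add _ _
  have pyth : Real.sin (τ/3)^2 + Real.cos (τ/3)^2 = 1 := Real.sin_sq_add_cos_sq _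
  have pyth2 : Real.sin (2*(τ/3))^2 + Real.cos (2*(τ/3))^2 = 1 := Real.sin_sq_add_cos_sq _
  set s1 := Real.sin (τ/3)
  set c1 := Real.cos (τ/3)
  set s2 := Real.sin (2*(τ/3))
  set c2 := Real.cos (2*(τ/3))
  set S := Real.sin τ
  set C := Real.cos τ
  -- linear system
  have eA : q1*s1 = p2*c1 + q2*s1 := by linear_combination hu13r - hu13l - c1*hp1
  have eB : p2*c2 + q2*s2 = p3*c2 + q3*s2 := by linear_combination hu23r - hu23l
  have eC0 : p3*C + q3*S = 0 := by linear_combination hU1 - hu1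
  have eD : τ*(q1*c1) - τ*(q2*c1 - p2*s1) = 12*(q1*s1) := by
    linear_combination hjump1 - hD1 + hD2 + 12*hu13l + (τ*s1 + 12*c1)*hp1
  have eE : τ*(q2*c2 - p2*s2) - τ*(q3*c2 - p3*s2) = 12*(p2*c2 + q2*s2) := by
    linear_combination hjump2 - hD3 + hD4 + 12*hu23l
  by_cases hq1 : q1 = 0
  · -- trivial solution, contradiction
    exfalso
    rw [hq1] at eA eD
    have e1 : p2*c1 + q2*s1 = 0 := by linarith [eA]
    have e2 : q2*c1 - p2*s1 = 0 := by
      have h0 : τ*(q2*c1 - p2*s1) = 0 := by linarith [eD]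
      rcases mul_eq_zero.mp h0 with h|h
      · exact absurd h hτ'
      · exact h
    have hp2 : p2 = 0 := by linear_combination c1*e1 - s1*e2 - p2*pyth
    have hq2 : q2 = 0 := by linear_combination s1*e1 + c1*e2 - q2*pyth
    rw [hp2, hq2] at eB eE
    have e3 : p3*c2 + q3*s2 = 0 := by linarith [eB]
    have e4 : q3*c2 - p3*s2 = 0 := by
      have h0 : τ*(q3*c2 - p3*s2) = 0 := by linarith [eE]
      rcases mul_eq_zero.mp h0 with h|h
      · exact absurd h hτ'
      · exact h
    have hp3 : p3 = 0 := by linear_combination c2*e3 - s2*e4 - p3*pyth2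
    have hq3 : q3 = 0 := by linear_combination s2*e3 + c2*e4 - q3*pyth2
    obtain ⟨x, hx, hUx⟩ := hne
    apply hUx
    rcases eq_or_lt_of_le hx.1 with h0 | h0
    · rw [← h0]; exact hU0
    rcases lt_trichotomy x (1/3) with h1 | h1 | h1
    · have := (hsol1 x ⟨h0, h1⟩).1
      rw [hp1, hq1] at this; simpa using this
    · rw [h1, hu13l, hp1, hq1]; ring
    rcases lt_trichotomy x (2/3) with h2 | h2 | h2
    · have := (hsol2 x ⟨h1, h2⟩).1
      rw [hp2, hq2] at this; simpa using this
    · rw [h2, hu23l, hp2, hq2]; ring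
    rcases eq_or_lt_of_le hx.2 with h3 | h3
    · rw [h3]; exact hU1
    · have := (hsol3 x ⟨h2, h3⟩).1
      rw [hp3, hq3] at this; simpa using this
  · have key : (108*s1 - 36*S + 12*τ*C - 12*τ*c1 + τ^2*S) * q1 = 0 := by
      linear_combination τ^2*eC0 + τ^2*c1*eB + τ*s1*eE +
        (τ^2*(c1^2 - s1^2) - 12*τ*s1*c1)*eA + (2*τ*s1*c1 - 12*s1^2)*eD +
        (-36*q1 + τ^2*q1 - τ^2*q3)*hS + (12*τ*q1 - τ^2*p3)*hCo +
        (-36*c1*q1 + 12*τ*s1*q2 - 12*τ*s1*q1 - τ^2*c1*q2 + τ^2*c1*q1 + τ^2*s1*p2)*hs2 +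
        (-36*s1*q1 + 12*τ*c1*q1 + 12*τ*s1*p2 - τ^2*c1*p2 - τ^2*s1*q2 + τ^2*s1*q1)*hc2 +
        (-144*s1*q1 + 24*τ*c1*q1 + 12*τ*s1*p2 - τ^2*c1*p2 - τ^2*s1*q2 + τ^2*s1*q1)*pyth
    have := (mul_eq_zero.mp key).resolve_right hq1
    linarith [this]
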